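/- arXiv:1909.03634 — 2 statements merged into one kernel-verified Lean document; each statement's English description precedes it below -/
import Mathlib

section
/- Let K be a densely defined linear operator on a Hilbert space H, γ ∉ Λ(K) so that (γI − K)⁻¹: H → Dom(K) is bounded and bijective. Suppose vectors v_0, v_1, … ∈ Dom(K) satisfy (γI−K)⁻¹(γ v_t − v_{t+1}) = v_t for all t. Define w_j := Σ_{t=0}^{j} C(j,t)(−1)^t γ^{j−t} v_t. Then (γI−K)⁻¹ w_{j+1} = w_j for all j ≥ 0; hence Span{w_1,…,w_S} equals the Krylov subspace Span{w_S, (γI−K)⁻¹w_S, …, (γI−K)^{−(S−1)}w_S}. -/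
/-- Let `K` be a densely defined operator on a Hilbert space `H`, and
`A = (γI − K)⁻¹ : H → Dom(K)` bounded and bijective. If vectors `v_t ∈ Dom(K)` satisfy
`A (γ v_t − v_{t+1}) = v_t` and `w_j := Σ_{t=0}^{j} C(j,t)(−1)^t γ^{j−t} v_t`, then
`A w_{j+1} = w_j` for all `j`, and `Span{w_1, …, w_S}` equals the Krylov subspace
`Span{w_S, A w_S, …, A^{S−1} w_S}`. -/
theorem shift_invert_krylov
    {H : Type*} [NormedAddCommGroup H] [InnerProductSpace ℂ H] [CompleteSpace H]
    (γ : ℂ)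
    (D : Submodule ℂ H) (hD : Dense (D : Set H))
    (K : D →ₗ[ℂ] H)
    (A : H →L[ℂ] H) (hA_bij : Function.Bijective A)
    (hA_range : ∀ y : H, A y ∈ D)
    (hA_inv : ∀ y : H, γ • (A y) - K ⟨A y, hA_range y⟩ = y)
    (v : ℕ → H) (hv : ∀ t, v t ∈ D)
    (hv_rec : ∀ t : ℕ, A (γ • v t - v (t + 1)) = v t)
    (w : ℕ → H)
    (hw : ∀ j, w j = ∑ t ∈ Finset.range (j + 1),
      ((j.choose t : ℂ) * (-1 : ℂ) ^ t * γ ^ (j - t)) • v t) :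
    (∀ j : ℕ, A (w (j + 1)) = w j) ∧
      ∀ S : ℕ,
        Submodule.span ℂ ((fun t => w (t + 1)) '' Set.Iio S) =
          Submodule.span ℂ ((fun i => (A ^ i) (w S)) '' Set.Iio S) := by
  have hAw : ∀ j : ℕ, A (w (j + 1)) = w j := by
    intro j
    have key : w (j + 1) = ∑ t ∈ Finset.range (j + 1),
        ((j.choose t : ℂ) * (-1 : ℂ) ^ t * γ ^ (j - t)) • (γ • v t - v (t + 1)) := by
      rw [hw]
      have expand : ∀ t ∈ Finset.range (j + 1),
          ((j.choose t : ℂ) * (-1 : ℂ) ^ t * γ ^ (j - t)) • (γ • v t - v (t + 1))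
          = ((j.choose t : ℂ) * (-1 : ℂ) ^ t * γ ^ (j + 1 - t)) • v t
            - ((j.choose t : ℂ) * (-1 : ℂ) ^ t * γ ^ (j - t)) • v (t + 1) := by
        intro t ht
        rw [Finset.mem_range] at ht
        have h1 : j + 1 - t = (j - t) + 1 := by omega
        rw [smul_sub, smul_smul]
        congr 1
        rw [h1, pow_succ]
        ring
      rw [Finset.sum_congr rfl expand, Finset.sum_sub_distrib]
      have hext : ∑ t ∈ Finset.range (j + 1),
          ((j.choose t : ℂ) * (-1 : ℂ) ^ t * γ ^ (j + 1 - t)) • v t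
          = ∑ t ∈ Finset.range (j + 2),
          ((j.choose t : ℂ) * (-1 : ℂ) ^ t * γ ^ (j + 1 - t)) • v t := by
        rw [Finset.sum_range_succ (n := j + 1)]
        simp [Nat.choose_succ_self]
      rw [hext]
      have hmain : ∑ t ∈ Finset.range (j + 2),
          (((j.choose t : ℂ) * (-1 : ℂ) ^ t * γ ^ (j + 1 - t))
            - (((j + 1).choose t : ℂ) * (-1 : ℂ) ^ t * γ ^ (j + 1 - t))) • v t
          = ∑ k ∈ Finset.range (j + 1),
            ((j.choose k : ℂ) * (-1 : ℂ) ^ k * γ ^ (j - k)) • v (k + 1) := by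
        rw [Finset.sum_range_succ']
        have hz : (((j.choose 0 : ℂ) * (-1 : ℂ) ^ 0 * γ ^ (j + 1 - 0))
            - (((j + 1).choose 0 : ℂ) * (-1 : ℂ) ^ 0 * γ ^ (j + 1 - 0))) • v 0 = 0 := by
          simp
        rw [hz, add_zero]
        apply Finset.sum_congr rfl
        intro k hk
        congr 1
        have hcs : ((j + 1).choose (k + 1) : ℂ) = (j.choose k : ℂ) + (j.choose (k + 1) : ℂ) := by
          rw [← Nat.cast_add, Nat.choose_succ_succ]
        have hss : j + 1 - (k + 1) = j - k := by omega
        rw [hcs, hss]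
        ring
      rw [eq_sub_iff_add_eq, ← hmain, ← Finset.sum_add_distrib]
      apply Finset.sum_congr rfl
      intro t ht
      rw [← add_smul]
      congr 1
      ring
    rw [key, map_sum]
    simp only [map_smul]
    rw [hw]
    apply Finset.sum_congr rfl
    intro t ht
    rw [hv_rec]
  refine ⟨hAw, ?_⟩
  have hpow : ∀ i j : ℕ, (A ^ i) (w (j + i)) = w j := by
    intro i
    induction i with
    | zero => intro j; simp
    | succ n ih =>
      intro j
      have h1 : (A ^ (n + 1)) (w (j + (n + 1))) = (A ^ n) (A (w (j + n + 1))) := by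
        rw [pow_succ]; rfl
      rw [h1, hAw (j + n), ih]
  intro S
  have hset : (fun t => w (t + 1)) '' Set.Iio S = (fun i => (A ^ i) (w S)) '' Set.Iio S := by
    ext x
    simp only [Set.mem_image, Set.mem_Iio]
    constructor
    · rintro ⟨t, ht, rfl⟩
      refine ⟨S - 1 - t, by omega, ?_⟩
      have := hpow (S - 1 - t) (t + 1)
      rwa [show t + 1 + (S - 1 - t) = S from by omega] at this
    · rintro ⟨i, hi, rfl⟩
      refine ⟨S - 1 - i, by omega, ?_⟩
      have := (hpow i (S - i)).symm
      rw [show S - i + i = S from by omega] at this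
      rw [show S - 1 - i + 1 = S - i from by omega]
      exact this
  rw [hset]
end

section
/- Convergence of the shift-invert Arnoldi approximation: let K be a (possibly unbounded) operator with γ ∉ Λ(K), so A := (γI − K)⁻¹ is bounded and bijective onto Dom(K). Let P_S = Q_S Q_S* be orthogonal projections converging strongly to the identity, L̃_S := Q_S* A Q_S assumed invertible, and K̃_S := γI − L̃_S⁻¹. Suppose additionally that for each u ∈ H, ‖Q_S K̃_S Q_S* A‖ · ‖P_S u − u‖ → 0 as S → ∞. Then for every v ∈ Dom(K) of the form v = A u, Q_S K̃_S Q_S* v → K v as S → ∞. -/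
set_option maxHeartbeats 1000000

open Filter Topology ContinuousLinearMap

/-- Convergence of the shift-invert Arnoldi approximation: with
`A = (γI − K)⁻¹` bounded and bijective onto `Dom(K)`, isometries `Q_S` whose projections
`P_S = Q_S Q_S*` converge strongly to the identity, invertible compressions
`L̃_S = Q_S* A Q_S` and `K̃_S = γ I − L̃_S⁻¹`, and assuming
`‖Q_S K̃_S Q_S* A‖ ‖P_S u − u‖ → 0` for every `u`, one has
`Q_S K̃_S Q_S* v → K v` for every `v = A u ∈ Dom(K)`. -/
theorem shift_invert_arnoldi_convergence
    {H : Type*} [NormedAddCommGroup H] [InnerProductSpace ℂ H] [CompleteSpace H]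
    (γ : ℂ)
    (D : Submodule ℂ H) (hD : Dense (D : Set H))
    (K : D →ₗ[ℂ] H)
    (A : H →L[ℂ] H) (hA_bij : Function.Bijective A)
    (hA_range : ∀ y : H, A y ∈ D)
    (hKA : ∀ u : H, K ⟨A u, hA_range u⟩ = γ • A u - u)
    (Q : ∀ S : ℕ, EuclideanSpace ℂ (Fin S) →L[ℂ] H)
    (hQ_isom : ∀ S (w : EuclideanSpace ℂ (Fin S)), ‖Q S w‖ = ‖w‖)
    (hP_strong : ∀ u : H, Tendsto (fun S => Q S (adjoint (Q S) u)) atTop (𝓝 u))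
    (Ltilde : ∀ S : ℕ, EuclideanSpace ℂ (Fin S) →L[ℂ] EuclideanSpace ℂ (Fin S))
    (hLtilde : ∀ S, Ltilde S = (adjoint (Q S)).comp (A.comp (Q S)))
    (Linv : ∀ S : ℕ, EuclideanSpace ℂ (Fin S) →L[ℂ] EuclideanSpace ℂ (Fin S))
    (hLinv₁ : ∀ S, (Ltilde S).comp (Linv S) = ContinuousLinearMap.id ℂ _)
    (hLinv₂ : ∀ S, (Linv S).comp (Ltilde S) = ContinuousLinearMap.id ℂ _)
    (Ktilde : ∀ S : ℕ, EuclideanSpace ℂ (Fin S) →L[ℂ] EuclideanSpace ℂ (Fin S))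
    (hKtilde : ∀ S, Ktilde S = γ • ContinuousLinearMap.id ℂ _ - Linv S)
    (hnorm : ∀ u : H,
      Tendsto (fun S =>
          ‖(Q S).comp ((Ktilde S).comp ((adjoint (Q S)).comp A))‖ *
            ‖Q S (adjoint (Q S) u) - u‖) atTop (𝓝 0)) :
    ∀ u : H,
      Tendsto (fun S => Q S (Ktilde S (adjoint (Q S) (A u)))) atTop
        (𝓝 (K ⟨A u, hA_range u⟩)) := by
  intro u
  -- contraction property of adjoint
  have hQle : ∀ S (x : H), ‖adjoint (Q S) x‖ ≤ ‖x‖ := by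
    intro S x
    have hQ1 : ‖Q S‖ ≤ 1 := (Q S).opNorm_le_bound zero_le_one
      (fun w => by rw [hQ_isom, one_mul])
    calc ‖adjoint (Q S) x‖ ≤ ‖adjoint (Q S)‖ * ‖x‖ := (adjoint (Q S)).le_opNorm x
      _ ≤ 1 * ‖x‖ := by
          gcongr
          rw [show ‖adjoint (Q S)‖ = ‖Q S‖ from
            (ContinuousLinearMap.adjoint (𝕜 := ℂ)).norm_map (Q S)]
          exact hQ1
      _ = ‖x‖ := one_mul ‖x‖
  -- key algebraic decomposition
  have key : ∀ S, Q S (Ktilde S (adjoint (Q S) (A u))) =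
      Q S (Ktilde S (adjoint (Q S) (A (u - Q S (adjoint (Q S) u)))))
      + (γ • (Q S (adjoint (Q S) (A (Q S (adjoint (Q S) u))))) - Q S (adjoint (Q S) u)) := by
    intro S
    have hsplit : A u = A (u - Q S (adjoint (Q S) u)) + A (Q S (adjoint (Q S) u)) := by
      rw [← A.map_add, sub_add_cancel]
    have hLt : adjoint (Q S) (A (Q S (adjoint (Q S) u))) = Ltilde S (adjoint (Q S) u) := by
      rw [hLtilde]; rfl
    have hLL : ∀ y, Linv S (Ltilde S y) = y := fun y =>
      ContinuousLinearMap.ext_iff.mp (hLinv₂ S) y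
    have hKt : ∀ y, Ktilde S y = γ • y - Linv S y := fun y => by
      rw [hKtilde]; rfl
    rw [hsplit, map_add, map_add, map_add]
    congr 1
    rw [hLt, hKt, hLL, map_sub, map_smul, ← hLt]
  -- first term tends to 0
  have h1 : Tendsto (fun S => Q S (Ktilde S (adjoint (Q S) (A (u - Q S (adjoint (Q S) u))))))
      atTop (𝓝 0) := by
    refine squeeze_zero_norm (fun S => ?_) (hnorm u)
    have : Q S (Ktilde S (adjoint (Q S) (A (u - Q S (adjoint (Q S) u)))))
        = ((Q S).comp ((Ktilde S).comp ((adjoint (Q S)).comp A)))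
            (u - Q S (adjoint (Q S) u)) := rfl
    rw [this, norm_sub_rev (Q S (adjoint (Q S) u)) u]
    exact ContinuousLinearMap.le_opNorm _ _
  -- P A P u → A u
  have h2 : Tendsto (fun S => Q S (adjoint (Q S) (A (Q S (adjoint (Q S) u)))))
      atTop (𝓝 (A u)) := by
    have hAP : Tendsto (fun S => A (Q S (adjoint (Q S) u))) atTop (𝓝 (A u)) :=
      ((A.continuous.tendsto u).comp (hP_strong u))
    have hz : Tendsto (fun S => Q S (adjoint (Q S) (A (Q S (adjoint (Q S) u)) - A u)))
        atTop (𝓝 0) := by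
      refine squeeze_zero_norm (fun S => ?_)
        ((tendsto_iff_norm_sub_tendsto_zero.mp hAP))
      calc ‖Q S (adjoint (Q S) (A (Q S (adjoint (Q S) u)) - A u))‖
          = ‖adjoint (Q S) (A (Q S (adjoint (Q S) u)) - A u)‖ := hQ_isom S _
        _ ≤ ‖A (Q S (adjoint (Q S) u)) - A u‖ := hQle S _
    have := hz.add (hP_strong (A u))
    rw [zero_add] at this
    refine this.congr (fun S => ?_)
    rw [← map_add, ← map_add, sub_add_cancel]
  -- combine
  have hfinal := h1.add (((h2.const_smul γ).sub (hP_strong u)))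
  rw [zero_add] at hfinal
  rw [hKA u]
  exact Tendsto.congr (fun S => (key S).symm) hfinal
end
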